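/- Witt decomposition of a real vector: for every X ∈ ℝ⁸, 1 ⊗ ι(X) = (1/8)·Σ_{i=0}^{7} Z_i in 𝕆 ⊗ Cl₈; equivalently, 1 ⊗ ι(X) = (1/8)·Σ_{i=0}^{7} f_i·(J_i(Φ(X)) ⊗ 1). -/

import Mathlib

noncomputable section

open scoped Quaternion TensorProduct

/-- The octonions, realized as the Cayley–Dickson double of the quaternions. -/
def Oct : Type := ℍ × ℍ

namespace Oct

instance : AddCommGroup Oct := inferInstanceAs (AddCommGroup (ℍ × ℍ))
instance : Module ℝ Oct := inferInstanceAs (Module ℝ (ℍ × ℍ))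

/-- First (quaternionic) component. -/
def x (p : Oct) : ℍ := Prod.fst p
/-- Second (quaternionic) component. -/
def y (p : Oct) : ℍ := Prod.snd p
/-- Build an octonion from two quaternions. -/
def mk (a b : ℍ) : Oct := ((a, b) : ℍ × ℍ)

@[simp] lemma x_mk (a b : ℍ) : (mk a b).x = a := rfl
@[simp] lemma y_mk (a b : ℍ) : (mk a b).y = b := rfl
@[simp] lemma x_add (p q : Oct) : (p + q).x = p.x + q.x := rfl
@[simp] lemma y_add (p q : Oct) : (p + q).y = p.y + q.y := rfl
@[simp] lemma x_smul (r : ℝ) (p : Oct) : (r • p).x = r • p.x := rfl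
@[simp] lemma y_smul (r : ℝ) (p : Oct) : (r • p).y = r • p.y := rfl
@[simp] lemma x_zero : (0 : Oct).x = 0 := rfl
@[simp] lemma y_zero : (0 : Oct).y = 0 := rfl

@[ext] lemma ext {p q : Oct} (h1 : p.x = q.x) (h2 : p.y = q.y) : p = q :=
  Prod.ext h1 h2

/-- Cayley–Dickson multiplication: `(a,b)·(c,d) = (a·c − conj(d)·b, d·a + b·conj(c))`. -/
instance : Mul Oct :=
  ⟨fun p q => mk (p.x * q.x - star q.y * p.y) (q.y * p.x + p.y * star q.x)⟩

instance : One Oct := ⟨mk 1 0⟩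

@[simp] lemma x_mul (p q : Oct) : (p * q).x = p.x * q.x - star q.y * p.y := rfl
@[simp] lemma y_mul (p q : Oct) : (p * q).y = q.y * p.x + p.y * star q.x := rfl
@[simp] lemma x_one : (1 : Oct).x = 1 := rfl
@[simp] lemma y_one : (1 : Oct).y = 0 := rfl

instance : NonUnitalNonAssocRing Oct :=
  { (inferInstance : AddCommGroup Oct) with
    mul := (· * ·)
    left_distrib := by
      intro p q r
      refine ext ?_ ?_ <;>
        simp only [x_mul, y_mul, x_add, y_add, star_add] <;> noncomm_ring
    right_distrib := by
      intro p q r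
      refine ext ?_ ?_ <;>
        simp only [x_mul, y_mul, x_add, y_add, star_add] <;> noncomm_ring
    zero_mul := by
      intro p
      refine ext ?_ ?_ <;> simp only [x_mul, y_mul, x_zero, y_zero, star_zero] <;> simp
    mul_zero := by
      intro p
      refine ext ?_ ?_ <;> simp only [x_mul, y_mul, x_zero, y_zero, star_zero] <;> simp }

instance : SMulCommClass ℝ Oct Oct where
  smul_comm r p q := by
    show r • (p * q) = p * (r • q)
    refine ext ?_ ?_ <;>
      simp [x_mul, y_mul, smul_sub, smul_add, mul_smul_comm, smul_mul_assoc,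
        star_smul, star_trivial]

instance : IsScalarTower ℝ Oct Oct where
  smul_assoc r p q := by
    show (r • p) * q = r • (p * q)
    refine ext ?_ ?_ <;>
      simp [x_mul, y_mul, smul_sub, smul_add, mul_smul_comm, smul_mul_assoc,
        star_smul, star_trivial]

/-- Octonionic conjugation: `conj (a,b) = (conj a, −b)`. -/
def conj (p : Oct) : Oct := mk (star p.x) (-p.y)

/-- The real part of an octonion. -/
def re (p : Oct) : ℝ := p.x.re

/-- The standard basis `e_0, …, e_7` of the octonions. -/
def e : Fin 8 → Oct :=
  ![mk 1 0, mk ⟨0, 1, 0, 0⟩ 0, mk ⟨0, 0, 1, 0⟩ 0, mk ⟨0, 0, 0, 1⟩ 0,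
    mk 0 1, mk 0 ⟨0, 1, 0, 0⟩, mk 0 ⟨0, 0, 1, 0⟩, mk 0 ⟨0, 0, 0, 1⟩]

/-- The real coordinates of an octonion with respect to the standard basis. -/
def coord : Fin 8 → Oct → ℝ :=
  ![fun p => p.x.re, fun p => p.x.imI, fun p => p.x.imJ, fun p => p.x.imK,
    fun p => p.y.re, fun p => p.y.imI, fun p => p.y.imJ, fun p => p.y.imK]

lemma coord_add (j : Fin 8) (p q : Oct) :
    coord j (p + q) = coord j p + coord j q := by fin_cases j <;> rfl

lemma coord_smul (j : Fin 8) (r : ℝ) (p : Oct) :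
    coord j (r • p) = r * coord j p := by fin_cases j <;> rfl

/-- The binary "dot product" `⟨i,j⟩ = i₁j₁ + i₂j₂ + i₃j₃` of binary digits. -/
def bdot (i j : Fin 8) : ℕ :=
  ((i.val.testBit 0 && j.val.testBit 0).toNat +
   (i.val.testBit 1 && j.val.testBit 1).toNat +
   (i.val.testBit 2 && j.val.testBit 2).toNat) % 2

/-- The involution `J_i`, the ℝ-linear map determined by `J_i(e_j) = (−1)^{⟨i,j⟩} e_j`. -/
def J (i : Fin 8) : Oct →ₗ[ℝ] Oct where
  toFun p := ∑ j : Fin 8, ((-1 : ℝ) ^ bdot i j * coord j p) • e j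
  map_add' p q := by
    simp only [coord_add, mul_add, add_smul]
    rw [Finset.sum_add_distrib]
  map_smul' r p := by
    simp only [coord_smul, RingHom.id_apply, Finset.smul_sum, smul_smul, mul_left_comm]

/-- The sign `σ(j,i)` defined by `J_j(conj e_i) = (−1)^{σ(j,i)} e_i`. -/
def sigma (j i : Fin 8) : ℕ := if i = 0 then 0 else (bdot j i + 1) % 2

end Oct
namespace Oct

@[simp] lemma e_0 : e 0 = mk 1 0 := rfl
@[simp] lemma e_1 : e 1 = mk ⟨0, 1, 0, 0⟩ 0 := rfl
@[simp] lemma e_2 : e 2 = mk ⟨0, 0, 1, 0⟩ 0 := rfl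
@[simp] lemma e_3 : e 3 = mk ⟨0, 0, 0, 1⟩ 0 := rfl
@[simp] lemma e_4 : e 4 = mk 0 1 := rfl
@[simp] lemma e_5 : e 5 = mk 0 ⟨0, 1, 0, 0⟩ := rfl
@[simp] lemma e_6 : e 6 = mk 0 ⟨0, 0, 1, 0⟩ := rfl
@[simp] lemma e_7 : e 7 = mk 0 ⟨0, 0, 0, 1⟩ := rfl

@[simp] lemma coord_0 (p : Oct) : coord 0 p = p.x.re := rfl
@[simp] lemma coord_1 (p : Oct) : coord 1 p = p.x.imI := rfl
@[simp] lemma coord_2 (p : Oct) : coord 2 p = p.x.imJ := rfl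
@[simp] lemma coord_3 (p : Oct) : coord 3 p = p.x.imK := rfl
@[simp] lemma coord_4 (p : Oct) : coord 4 p = p.y.re := rfl
@[simp] lemma coord_5 (p : Oct) : coord 5 p = p.y.imI := rfl
@[simp] lemma coord_6 (p : Oct) : coord 6 p = p.y.imJ := rfl
@[simp] lemma coord_7 (p : Oct) : coord 7 p = p.y.imK := rfl

lemma coord_e (l m : Fin 8) : coord l (e m) = if l = m then 1 else 0 := by
  fin_cases l <;> fin_cases m <;> rfl

lemma sum_coord_smul_e (p : Oct) : ∑ l : Fin 8, coord l p • e l = p := by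
  refine ext ?_ ?_ <;> refine QuaternionAlgebra.ext ?_ ?_ ?_ ?_ <;> rw [Fin.sum_univ_eight]
  · show p.x.re * 1 + p.x.imI * 0 + p.x.imJ * 0 + p.x.imK * 0 + p.y.re * 0 + p.y.imI * 0 + p.y.imJ * 0 + p.y.imK * 0 = p.x.re
    ring
  · show p.x.re * 0 + p.x.imI * 1 + p.x.imJ * 0 + p.x.imK * 0 + p.y.re * 0 + p.y.imI * 0 + p.y.imJ * 0 + p.y.imK * 0 = p.x.imI
    ring
  · show p.x.re * 0 + p.x.imI * 0 + p.x.imJ * 1 + p.x.imK * 0 + p.y.re * 0 + p.y.imI * 0 + p.y.imJ * 0 + p.y.imK * 0 = p.x.imJ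
    ring
  · show p.x.re * 0 + p.x.imI * 0 + p.x.imJ * 0 + p.x.imK * 1 + p.y.re * 0 + p.y.imI * 0 + p.y.imJ * 0 + p.y.imK * 0 = p.x.imK
    ring
  · show p.x.re * 0 + p.x.imI * 0 + p.x.imJ * 0 + p.x.imK * 0 + p.y.re * 1 + p.y.imI * 0 + p.y.imJ * 0 + p.y.imK * 0 = p.y.re
    ring
  · show p.x.re * 0 + p.x.imI * 0 + p.x.imJ * 0 + p.x.imK * 0 + p.y.re * 0 + p.y.imI * 1 + p.y.imJ * 0 + p.y.imK * 0 = p.y.imI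
    ring
  · show p.x.re * 0 + p.x.imI * 0 + p.x.imJ * 0 + p.x.imK * 0 + p.y.re * 0 + p.y.imI * 0 + p.y.imJ * 1 + p.y.imK * 0 = p.y.imJ
    ring
  · show p.x.re * 0 + p.x.imI * 0 + p.x.imJ * 0 + p.x.imK * 0 + p.y.re * 0 + p.y.imI * 0 + p.y.imJ * 0 + p.y.imK * 1 = p.y.imK
    ring

end Oct

/-- The ℝ-linear isomorphism `Φ : ℝ⁸ → 𝕆` with `Φ(b_l) = e_l`. -/
def Phi : EuclideanSpace ℝ (Fin 8) ≃ₗ[ℝ] Oct where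
  toFun v := ∑ l : Fin 8, v l • Oct.e l
  map_add' u v := by
    simp only [PiLp.add_apply, add_smul]
    rw [Finset.sum_add_distrib]
  map_smul' r v := by
    simp only [PiLp.smul_apply, smul_eq_mul, RingHom.id_apply, Finset.smul_sum, smul_smul]
  invFun p := (WithLp.toLp 2 (fun l => Oct.coord l p) : EuclideanSpace ℝ (Fin 8))
  left_inv v := by
    ext l
    fin_cases l <;>
      simp only [Fin.sum_univ_eight, Oct.coord_add, Oct.coord_smul, Oct.coord_e] <;> simp
  right_inv p := Oct.sum_coord_smul_e p

/-- The quadratic form `Q(v) = −‖v‖²` on ℝ⁸. -/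
def Q8 : QuadraticForm ℝ (EuclideanSpace ℝ (Fin 8)) :=
  - LinearMap.BilinMap.toQuadraticMap
      (innerₗ (EuclideanSpace ℝ (Fin 8)) : LinearMap.BilinForm ℝ (EuclideanSpace ℝ (Fin 8)))

/-- The Clifford algebra `Cl₈` of `Q(v) = −‖v‖²` on ℝ⁸. -/
abbrev Cl8 := CliffordAlgebra Q8

/-- The Clifford generators `g_l := ι(b_l)`. -/
def g (l : Fin 8) : Cl8 := CliffordAlgebra.ι Q8 (EuclideanSpace.single l 1)

/-- The extension `J_j ⊗ id` of `J_j` to `𝕆 ⊗ Cl₈`. -/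
def JT (j : Fin 8) : Oct ⊗[ℝ] Cl8 →ₗ[ℝ] Oct ⊗[ℝ] Cl8 :=
  TensorProduct.map (Oct.J j) LinearMap.id

/-- The element `Ω := Σᵢ conj(eᵢ) ⊗ gᵢ` of `𝕆 ⊗ Cl₈`. -/
def Omega : Oct ⊗[ℝ] Cl8 := ∑ i : Fin 8, (Oct.e i).conj ⊗ₜ[ℝ] g i

/-- The octonionic Witt basis `f_j := (J_j ⊗ id)(Ω)`. -/
def f (j : Fin 8) : Oct ⊗[ℝ] Cl8 := JT j Omega

/-- The twistor vectors `X_i := Φ⁻¹(Φ(X)·conj(e_i))`. -/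
def Xtw (X : EuclideanSpace ℝ (Fin 8)) (i : Fin 8) : EuclideanSpace ℝ (Fin 8) :=
  Phi.symm (Phi X * (Oct.e i).conj)

/-- The Hermitian variables `Z_j := (J_j ⊗ id)(Ω·(Φ(X) ⊗ 1))`. -/
def Z (X : EuclideanSpace ℝ (Fin 8)) (j : Fin 8) : Oct ⊗[ℝ] Cl8 :=
  JT j (Omega * (Phi X ⊗ₜ[ℝ] (1 : Cl8)))

/-! On `𝕆 = ℍ × ℍ` one has `J_i (a, b) = (σ a, ± σ b)`, where `σ` changes the signs of the
`i`- and `j`-coordinates as prescribed by the two low bits of `i` (and hence that of `k = i j`).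
Since `σ` is an automorphism of `ℍ` commuting with conjugation, the Cayley–Dickson formula makes
`J_i` multiplicative, which turns `f_i · (J_i(Φ X) ⊗ 1)` into `Z_i`. Orthogonality of the
characters `i ↦ (-1)^⟨i,l⟩` gives `∑_i J_i p = 8 re(p)`, and `re(conj(e_l) · Φ(X)) = X_l`, so
`∑_i Z_i = 8 ∑_l X_l (1 ⊗ g_l) = 8 (1 ⊗ ι(X))`. -/

namespace Quaternion

def signFlip (ε₁ ε₂ : ℝ) (q : ℍ) : ℍ := ⟨q.re, ε₁ * q.imI, ε₂ * q.imJ, ε₁ * ε₂ * q.imK⟩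

@[simp] lemma re_signFlip (ε₁ ε₂ : ℝ) (q : ℍ) : (signFlip ε₁ ε₂ q).re = q.re := rfl
@[simp] lemma imI_signFlip (ε₁ ε₂ : ℝ) (q : ℍ) : (signFlip ε₁ ε₂ q).imI = ε₁ * q.imI := rfl
@[simp] lemma imJ_signFlip (ε₁ ε₂ : ℝ) (q : ℍ) : (signFlip ε₁ ε₂ q).imJ = ε₂ * q.imJ := rfl
@[simp] lemma imK_signFlip (ε₁ ε₂ : ℝ) (q : ℍ) :
    (signFlip ε₁ ε₂ q).imK = ε₁ * ε₂ * q.imK := rfl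

lemma star_signFlip (ε₁ ε₂ : ℝ) (q : ℍ) :
    star (signFlip ε₁ ε₂ q) = signFlip ε₁ ε₂ (star q) := by
  ext <;> simp

lemma signFlip_add (ε₁ ε₂ : ℝ) (p q : ℍ) :
    signFlip ε₁ ε₂ (p + q) = signFlip ε₁ ε₂ p + signFlip ε₁ ε₂ q := by
  ext <;> simp only [re_signFlip, imI_signFlip, imJ_signFlip, imK_signFlip,
    re_add, imI_add, imJ_add, imK_add] <;> ring

lemma signFlip_sub (ε₁ ε₂ : ℝ) (p q : ℍ) :
    signFlip ε₁ ε₂ (p - q) = signFlip ε₁ ε₂ p - signFlip ε₁ ε₂ q := by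
  ext <;> simp only [re_signFlip, imI_signFlip, imJ_signFlip, imK_signFlip,
    re_sub, imI_sub, imJ_sub, imK_sub] <;> ring

lemma signFlip_mul {ε₁ ε₂ : ℝ} (h₁ : ε₁ = 1 ∨ ε₁ = -1) (h₂ : ε₂ = 1 ∨ ε₂ = -1) (p q : ℍ) :
    signFlip ε₁ ε₂ (p * q) = signFlip ε₁ ε₂ p * signFlip ε₁ ε₂ q := by
  rcases h₁ with rfl | rfl <;> rcases h₂ with rfl | rfl <;>
    ext <;> simp only [re_signFlip, imI_signFlip, imJ_signFlip, imK_signFlip,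
      re_mul, imI_mul, imJ_mul, imK_mul] <;> ring

end Quaternion

namespace Oct

lemma ext_coord {p q : Oct} (h : ∀ l, coord l p = coord l q) : p = q := by
  rw [← sum_coord_smul_e p, ← sum_coord_smul_e q]
  simp only [h]

lemma coord_sum {ι : Type*} (l : Fin 8) (s : Finset ι) (f : ι → Oct) :
    coord l (∑ i ∈ s, f i) = ∑ i ∈ s, coord l (f i) :=
  map_sum (AddMonoidHom.mk' (coord l) (coord_add l)) f s

lemma coord_J (i l : Fin 8) (p : Oct) : coord l (J i p) = (-1) ^ bdot i l * coord l p := by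
  simp [J, coord_sum, coord_smul, coord_e]

def signFlip (ε₁ ε₂ ε₃ : ℝ) (p : Oct) : Oct :=
  mk (Quaternion.signFlip ε₁ ε₂ p.x) (ε₃ • Quaternion.signFlip ε₁ ε₂ p.y)

lemma signFlip_mul {ε₁ ε₂ ε₃ : ℝ} (h₁ : ε₁ = 1 ∨ ε₁ = -1) (h₂ : ε₂ = 1 ∨ ε₂ = -1)
    (h₃ : ε₃ = 1 ∨ ε₃ = -1) (p q : Oct) :
    signFlip ε₁ ε₂ ε₃ (p * q) = signFlip ε₁ ε₂ ε₃ p * signFlip ε₁ ε₂ ε₃ q := by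
  have h₃₃ : ε₃ * ε₃ = 1 := by rcases h₃ with rfl | rfl <;> norm_num
  refine ext ?_ ?_ <;>
    simp only [signFlip, x_mk, y_mk, x_mul, y_mul, Quaternion.signFlip_mul h₁ h₂,
      Quaternion.signFlip_sub, Quaternion.signFlip_add, Quaternion.star_signFlip,
      Quaternion.star_smul, smul_mul_assoc, mul_smul_comm, smul_smul, h₃₃, one_smul, smul_add]

def bitSign (i : Fin 8) (k : ℕ) : ℝ := if i.val.testBit k then -1 else 1

lemma bitSign_eq_one_or_neg_one (i : Fin 8) (k : ℕ) : bitSign i k = 1 ∨ bitSign i k = -1 := by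
  unfold bitSign
  split <;> simp

lemma neg_one_pow_toNat_and (a b : Bool) :
    (-1 : ℝ) ^ (a && b).toNat = (if a then -1 else 1) ^ b.toNat := by
  cases a <;> cases b <;> simp

lemma neg_one_pow_bdot (i l : Fin 8) :
    (-1 : ℝ) ^ bdot i l = bitSign i 0 ^ (l.val.testBit 0).toNat *
      bitSign i 1 ^ (l.val.testBit 1).toNat * bitSign i 2 ^ (l.val.testBit 2).toNat := by
  rw [bdot, ← neg_one_pow_eq_pow_mod_two, pow_add, pow_add]
  simp only [neg_one_pow_toNat_and, bitSign]

lemma J_eq_signFlip (i : Fin 8) (p : Oct) :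
    J i p = signFlip (bitSign i 0) (bitSign i 1) (bitSign i 2) p := by
  refine ext_coord fun l => ?_
  rw [coord_J, neg_one_pow_bdot]
  fin_cases l <;> simp [signFlip, Quaternion.re_smul, Nat.testBit] <;> ring

lemma J_mul (i : Fin 8) (p q : Oct) : J i (p * q) = J i p * J i q := by
  simp only [J_eq_signFlip]
  exact signFlip_mul (bitSign_eq_one_or_neg_one i 0) (bitSign_eq_one_or_neg_one i 1)
    (bitSign_eq_one_or_neg_one i 2) p q

lemma sum_neg_one_pow_bdot (l : Fin 8) :
    ∑ i : Fin 8, (-1 : ℝ) ^ bdot i l = if l = 0 then 8 else 0 := by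
  fin_cases l <;> simp [Fin.sum_univ_eight, bdot, Nat.testBit]

lemma sum_J (p : Oct) : ∑ i : Fin 8, J i p = (8 * re p) • (1 : Oct) := by
  refine ext_coord fun l => ?_
  rw [coord_sum, coord_smul, show (1 : Oct) = e 0 from rfl, coord_e]
  simp only [coord_J, ← Finset.sum_mul, sum_neg_one_pow_bdot]
  split_ifs with hl
  · subst hl
    simp [re]
  · simp

lemma re_conj_mul (a p : Oct) : (a.conj * p).re = ∑ k : Fin 8, coord k a * coord k p := by
  simp only [re, conj, x_mul, x_mk, y_mk, mul_neg, sub_neg_eq_add, Quaternion.re_add,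
    Quaternion.re_mul, Quaternion.re_star, Quaternion.imI_star, neg_mul, Quaternion.imJ_star,
    Quaternion.imK_star, Fin.sum_univ_eight, Fin.isValue, coord_0, coord_1, coord_2, coord_3,
    coord_4, coord_5, coord_6, coord_7]
  ring

lemma re_conj_e_mul (l : Fin 8) (p : Oct) : ((e l).conj * p).re = coord l p := by
  simp [re_conj_mul, coord_e]

end Oct

lemma JT_tmul (i : Fin 8) (p : Oct) (c : Cl8) : JT i (p ⊗ₜ[ℝ] c) = Oct.J i p ⊗ₜ[ℝ] c :=
  TensorProduct.map_tmul _ _ _ _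

lemma Omega_mul_tmul_one (p : Oct) :
    Omega * (p ⊗ₜ[ℝ] (1 : Cl8)) = ∑ l : Fin 8, ((Oct.e l).conj * p) ⊗ₜ[ℝ] g l := by
  simp only [Omega, Finset.sum_mul, Algebra.TensorProduct.tmul_mul_tmul, mul_one]

lemma f_mul_J_tmul_one (i : Fin 8) (p : Oct) :
    f i * (Oct.J i p ⊗ₜ[ℝ] (1 : Cl8)) = JT i (Omega * (p ⊗ₜ[ℝ] (1 : Cl8))) := by
  rw [Omega_mul_tmul_one, f, Omega]
  simp only [map_sum, JT_tmul, Finset.sum_mul, Algebra.TensorProduct.tmul_mul_tmul, mul_one,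
    Oct.J_mul]

lemma ι_eq_sum_smul_g (X : EuclideanSpace ℝ (Fin 8)) :
    CliffordAlgebra.ι Q8 X = ∑ l : Fin 8, X l • g l := by
  conv_lhs => rw [← (EuclideanSpace.basisFun (Fin 8) ℝ).sum_repr X]
  simp [g]

lemma coord_Phi (X : EuclideanSpace ℝ (Fin 8)) (l : Fin 8) : Oct.coord l (Phi X) = X l :=
  congrArg (fun v : EuclideanSpace ℝ (Fin 8) => v l) (Phi.symm_apply_apply X)

lemma sum_Z (X : EuclideanSpace ℝ (Fin 8)) :
    ∑ i : Fin 8, Z X i = (8 : ℝ) • ((1 : Oct) ⊗ₜ[ℝ] CliffordAlgebra.ι Q8 X) := by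
  simp only [Z, Omega_mul_tmul_one, map_sum, JT_tmul]
  rw [Finset.sum_comm]
  simp only [← TensorProduct.sum_tmul, Oct.sum_J, Oct.re_conj_e_mul, coord_Phi, ι_eq_sum_smul_g,
    TensorProduct.tmul_sum, Finset.smul_sum, TensorProduct.smul_tmul', TensorProduct.tmul_smul,
    smul_smul]

/-- Witt decomposition of a real vector:
`1 ⊗ ι(X) = (1/8)·Σᵢ Zᵢ`, and equivalently `1 ⊗ ι(X) = (1/8)·Σᵢ fᵢ·(Jᵢ(Φ(X)) ⊗ 1)`. -/
theorem witt_decomposition (X : EuclideanSpace ℝ (Fin 8)) :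
    (1 : Oct) ⊗ₜ[ℝ] CliffordAlgebra.ι Q8 X = (8 : ℝ)⁻¹ • ∑ i : Fin 8, Z X i ∧
    (1 : Oct) ⊗ₜ[ℝ] CliffordAlgebra.ι Q8 X
      = (8 : ℝ)⁻¹ • ∑ i : Fin 8, f i * (Oct.J i (Phi X) ⊗ₜ[ℝ] (1 : Cl8)) := by
  have hZ : (1 : Oct) ⊗ₜ[ℝ] CliffordAlgebra.ι Q8 X = (8 : ℝ)⁻¹ • ∑ i : Fin 8, Z X i := by
    rw [sum_Z, smul_smul]
    norm_num
  refine ⟨hZ, ?_⟩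
  simp only [f_mul_J_tmul_one]
  exact hZ
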